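/- arXiv:2011.05611 — 6 statements merged into one kernel-verified Lean document; each statement's English description precedes it below -/
import Mathlib

section
/- For the Bakhvalov-type mesh, the first step size satisfies c·εN^{-1} ≤ h_0 ≤ C·εN^{-1} for positive constants c, C depending only on σ and β (not on ε or N). -/
/-!
With `t = 2(1-ε)/N` we have `h₀ = (σε/β)·(-log(1-t))`. The elementary bounds
`t ≤ -log(1-t) ≤ 2t` for `0 ≤ t ≤ 1/2`, together with `1/N ≤ t ≤ 2/N` (as `ε ≤ 1/N ≤ 1/4`),
give `(σ/β)·ε/N ≤ h₀ ≤ (4σ/β)·ε/N`.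
-/

open Real

lemma le_neg_log_one_sub {t : ℝ} (ht : t < 1) : t ≤ -log (1 - t) := by
  linarith [log_le_sub_one_of_pos (sub_pos.2 ht)]

lemma neg_log_one_sub_le_two_mul {t : ℝ} (h0 : 0 ≤ t) (ht : t ≤ 1 / 2) :
    -log (1 - t) ≤ 2 * t := by
  have hpos : 0 < 1 - t := by linarith
  have hinv : (1 - t)⁻¹ ≤ 1 + 2 * t := by
    rw [inv_le_iff_one_le_mul₀ hpos]
    nlinarith
  linarith [one_sub_inv_le_log_of_pos hpos]

/-- For the Bakhvalov-type mesh, the first step size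
`h_0 = x_1 - x_0 = (σε/β)·(-ln(1 - 2(1-ε)/N))` satisfies
`c·ε/N ≤ h_0 ≤ C·ε/N` with constants `c, C > 0` depending only on `σ` and `β`. -/
theorem stmt2 (σ β : ℝ) (hσ : 0 < σ) (hβ : 0 < β) :
    ∃ c C : ℝ, 0 < c ∧ 0 < C ∧
      ∀ (N : ℕ) (ε : ℝ), 4 ≤ N → Even N → 0 < ε → ε ≤ 1/(N:ℝ) →
        c * ε / (N:ℝ) ≤ σ*ε/β * (-Real.log (1 - 2*(1-ε)*(1/(N:ℝ)))) ∧
        σ*ε/β * (-Real.log (1 - 2*(1-ε)*(1/(N:ℝ)))) ≤ C * ε / (N:ℝ) := by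
  refine ⟨σ / β, 4 * σ / β, by positivity, by positivity, fun N ε hN _ hε hεN => ?_⟩
  have hN : (4 : ℝ) ≤ N := by exact_mod_cast hN
  have hε_half : ε ≤ 1 / 2 :=
    hεN.trans (by rw [div_le_div_iff₀ (by linarith) two_pos]; linarith)
  have hN_inv : (0 : ℝ) < 1 / N := by positivity
  set t := 2 * (1 - ε) * (1 / (N : ℝ))
  have ht_lower : 1 / (N : ℝ) ≤ t := le_mul_of_one_le_left hN_inv.le (by linarith)
  have ht_upper : t ≤ 2 * (1 / N) := mul_le_mul_of_nonneg_right (by linarith) hN_inv.le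
  have ht_half : t ≤ 1 / 2 :=
    ht_upper.trans (by rw [← div_eq_mul_one_div, div_le_div_iff₀ (by linarith) two_pos]; linarith)
  constructor
  · calc σ / β * ε / N = σ * ε / β * (1 / N) := by ring
      _ ≤ σ * ε / β * t := by gcongr
      _ ≤ σ * ε / β * -log (1 - t) := by gcongr; exact le_neg_log_one_sub (by linarith)
  · calc σ * ε / β * -log (1 - t) ≤ σ * ε / β * (2 * t) := by
          gcongr; exact neg_log_one_sub_le_two_mul (by linarith) ht_half
      _ ≤ σ * ε / β * (2 * (2 * (1 / N))) := by gcongr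
      _ = 4 * σ / β * ε / N := by ring
end

section
/- For the Bakhvalov-type mesh, the step size h_{N/2-2} = x_{N/2-1} - x_{N/2-2} satisfies (1/4)·σε ≤ h_{N/2-2} ≤ σε. -/
/-!
With `N = 2k` the two mesh points are `-σε log (ε + j(1-ε)/k)` for `j = 1, 2`, so the step is
`σε log ((ε + 2b)/(ε + b))` with `b = (1-ε)/k`. The ratio is at most `2`, so its log is at most `1`; since
`εk ≤ 1/2` it is at least `8/5 > e^{1/4}`.
-/

open Real

lemma exp_one_quarter_lt : exp (1/4) < 8/5 := by
  refine lt_of_pow_lt_pow_left₀ 4 (by norm_num) ?_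
  rw [← exp_nat_mul]
  norm_num
  linarith [exp_one_lt_d9]

lemma one_quarter_le_log_add_two_mul_sub_log_add {a b : ℝ} (ha : 0 ≤ a) (hb : 0 < b)
    (hab : 3 * a ≤ 2 * b) : 1/4 ≤ log (a + 2 * b) - log (a + b) := by
  rw [← log_div (by positivity) (by positivity), le_log_iff_exp_le (by positivity),
    le_div_iff₀ (by positivity)]
  calc exp (1/4) * (a + b) ≤ 8/5 * (a + b) := by gcongr; exact exp_one_quarter_lt.le
    _ ≤ a + 2 * b := by linarith

lemma log_add_two_mul_sub_log_add_le_one {a b : ℝ} (ha : 0 ≤ a) (hb : 0 < b) :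
    log (a + 2 * b) - log (a + b) ≤ 1 := by
  rw [← log_div (by positivity) (by positivity)]
  have hratio : (a + 2 * b) / (a + b) ≤ 2 := by
    rw [div_le_iff₀ (by positivity)]
    linarith
  linarith [log_le_sub_one_of_pos (show 0 < (a + 2 * b) / (a + b) by positivity)]

lemma one_sub_two_mul_cast_sub_div_add_self (ε : ℝ) {k j : ℕ} (hk : 0 < k) (hj : j ≤ k) :
    1 - 2 * (1 - ε) * (((k - j : ℕ) : ℝ) / ((k + k : ℕ) : ℝ)) = ε + j * ((1 - ε) / k) := by
  have hkR : (k : ℝ) ≠ 0 := by positivity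
  rw [Nat.cast_sub hj, Nat.cast_add, ← two_mul]
  field_simp
  ring

/-- For the Bakhvalov-type mesh (with `β = 1` absorbed into `σ`), the step size
`h_{N/2-2} = x_{N/2-1} - x_{N/2-2}` satisfies `(1/4)σε ≤ h_{N/2-2} ≤ σε`. -/
theorem stmt3 (N : ℕ) (hN : 4 ≤ N) (hNe : Even N) (ε σ : ℝ)
    (hε0 : 0 < ε) (hε : ε ≤ 1/(N:ℝ)) (hσ : 0 < σ)
    (x : ℕ → ℝ)
    (hx : ∀ i ≤ N/2, x i = σ*ε * (-Real.log (1 - 2*(1-ε)*((i:ℝ)/(N:ℝ))))) :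
    (1/4) * σ * ε ≤ x (N/2 - 1) - x (N/2 - 2) ∧
    x (N/2 - 1) - x (N/2 - 2) ≤ σ * ε := by
  obtain ⟨k, rfl⟩ := hNe
  have hk : 2 ≤ k := by omega
  have hkR : (2 : ℝ) ≤ k := by exact_mod_cast hk
  have hεk : ε * (2 * k) ≤ 1 := by
    rw [← le_div_iff₀ (by positivity)]
    simpa [two_mul] using hε
  set b := (1 - ε) / k
  have hb : 0 < b := div_pos (by nlinarith) (by positivity)
  have hab : 3 * ε ≤ 2 * b := by
    rw [mul_div_assoc', le_div_iff₀ (by positivity)]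
    nlinarith
  have hmesh : ∀ j ≤ k, x ((k + k) / 2 - j) = σ * ε * (-log (ε + j * b)) := fun j hj => by
    rw [hx _ (by omega), show (k + k) / 2 = k by omega,
      one_sub_two_mul_cast_sub_div_add_self ε (by omega) hj]
  have hstep : x ((k + k) / 2 - 1) - x ((k + k) / 2 - 2)
      = σ * ε * (log (ε + 2 * b) - log (ε + b)) := by
    rw [hmesh 1 (by omega), hmesh 2 hk]
    simp only [Nat.cast_one, Nat.cast_ofNat, one_mul]
    ring
  have hσε : 0 < σ * ε := mul_pos hσ hε0
  rw [hstep]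
  constructor
  · nlinarith [one_quarter_le_log_add_two_mul_sub_log_add hε0.le hb hab]
  · nlinarith [log_add_two_mul_sub_log_add_le_one hε0.le hb]
end

section
/- For the Bakhvalov-type mesh, the transition step size h_{N/2-1} = x_{N/2} - x_{N/2-1} satisfies (1/2)·σε ≤ h_{N/2-1} ≤ 2σ·N^{-1}, and moreover h_{N/2-1} = (σε/β)·ln((ε + 2(1-ε)/N)/ε). -/
/-!
With `N = 2k`, the mesh arguments `1 - 2(1-ε)i/N` at `i = k` and `i = k - 1` are `ε` and
`ε + d` with `d = 2(1-ε)/N`, so `h_{N/2-1} = (σε/β)·log(1 + d/ε)`. Since `εN ≤ 1` and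
`ε ≤ 1/2`, we have `ε ≤ d`, hence `log(1 + d/ε) ≥ log 2 > 1/2`; and `log(1 + t) ≤ t`
gives `ε·log(1 + d/ε) ≤ d ≤ 2/N`.
-/

open Real

lemma one_sub_mul_div_add_self {ε : ℝ} {k : ℕ} (hk : k ≠ 0) :
    1 - 2 * (1 - ε) * ((k : ℝ) / ((k + k : ℕ) : ℝ)) = ε := by
  have hk' : (k : ℝ) ≠ 0 := by exact_mod_cast hk
  push_cast
  field_simp
  ring

lemma one_sub_mul_pred_div_add_self {ε : ℝ} {k : ℕ} (hk : k ≠ 0) :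
    1 - 2 * (1 - ε) * (((k - 1 : ℕ) : ℝ) / ((k + k : ℕ) : ℝ))
      = ε + 2 * (1 - ε) / ((k + k : ℕ) : ℝ) := by
  have hk' : (k : ℝ) ≠ 0 := by exact_mod_cast hk
  rw [Nat.cast_sub (Nat.one_le_iff_ne_zero.mpr hk)]
  push_cast
  field_simp
  ring

lemma one_half_lt_log_add_div_self {ε d : ℝ} (hε : 0 < ε) (hεd : ε ≤ d) :
    1 / 2 < log ((ε + d) / ε) := by
  have htwo : 2 ≤ (ε + d) / ε := by rw [le_div_iff₀ hε]; linarith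
  calc (1 : ℝ) / 2 < log 2 := log_two_gt_d9.trans_le' (by norm_num)
    _ ≤ log ((ε + d) / ε) := log_le_log (by norm_num) htwo

lemma mul_log_add_div_self_le {ε d : ℝ} (hε : 0 < ε) (hd : 0 ≤ d) :
    ε * log ((ε + d) / ε) ≤ d := by
  have hlog := log_le_sub_one_of_pos (show 0 < (ε + d) / ε by positivity)
  calc ε * log ((ε + d) / ε) ≤ ε * ((ε + d) / ε - 1) := by gcongr
    _ = d := by field_simp; ring

theorem stmt4_general (N : ℕ) (hN : 4 ≤ N) (hNe : Even N) (ε σ β : ℝ)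
    (hε0 : 0 < ε) (hε : ε ≤ 1/(N:ℝ)) (hσ : 0 < σ)
    (x : ℕ → ℝ)
    (hx : ∀ i ≤ N/2, x i = σ*ε/β * (-Real.log (1 - 2*(1-ε)*((i:ℝ)/(N:ℝ))))) :
    x (N/2) - x (N/2 - 1) = σ*ε/β * Real.log ((ε + 2*(1-ε)/(N:ℝ))/ε) ∧
    (β = 1 →
      (1/2) * σ * ε ≤ x (N/2) - x (N/2 - 1) ∧
      x (N/2) - x (N/2 - 1) ≤ 2 * σ / (N:ℝ)) := by
  obtain ⟨k, rfl⟩ := hNe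
  have hhalf : (k + k) / 2 = k := by omega
  have hk : k ≠ 0 := by omega
  set n : ℝ := ((k + k : ℕ) : ℝ)
  have hn : 4 ≤ n := by simp only [n]; exact_mod_cast hN
  have hεn : ε * n ≤ 1 := (le_div_iff₀ (by positivity)).mp hε
  have hd : 0 ≤ 2 * (1 - ε) / n := div_nonneg (by nlinarith) (by positivity)
  have hstep : x ((k + k) / 2) - x ((k + k) / 2 - 1) = σ*ε/β * log ((ε + 2*(1-ε)/n)/ε) := by
    rw [hx _ le_rfl, hx _ (Nat.sub_le _ _), hhalf, one_sub_mul_div_add_self hk,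
      one_sub_mul_pred_div_add_self hk, log_div (by positivity) hε0.ne']
    ring
  refine ⟨hstep, fun hβ => ?_⟩
  rw [hstep, hβ, div_one]
  have hεd : ε ≤ 2 * (1 - ε) / n := by
    rw [le_div_iff₀ (by positivity)]
    nlinarith
  constructor
  · nlinarith [one_half_lt_log_add_div_self hε0 hεd, mul_pos hσ hε0]
  · calc σ * ε * log ((ε + 2*(1-ε)/n)/ε) = σ * (ε * log ((ε + 2*(1-ε)/n)/ε)) := by ring
      _ ≤ σ * (2 * (1 - ε) / n) := by gcongr; exact mul_log_add_div_self_le hε0 hd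
      _ ≤ 2 * σ / n := by
        rw [mul_div_assoc']; exact div_le_div_of_nonneg_right (by nlinarith) (by positivity)

/-- For the Bakhvalov-type mesh, the transition step size
`h_{N/2-1} = x_{N/2} - x_{N/2-1}` equals `(σε/β)·ln((ε + 2(1-ε)/N)/ε)`, and
(for `β = 1`) satisfies `(1/2)σε ≤ h_{N/2-1} ≤ 2σ/N`. -/
theorem stmt4 (N : ℕ) (hN : 4 ≤ N) (hNe : Even N) (ε σ β : ℝ)
    (hε0 : 0 < ε) (hε : ε ≤ 1/(N:ℝ)) (hσ : 0 < σ) (hβ : 0 < β)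
    (x : ℕ → ℝ)
    (hx : ∀ i ≤ N/2, x i = σ*ε/β * (-Real.log (1 - 2*(1-ε)*((i:ℝ)/(N:ℝ))))) :
    x (N/2) - x (N/2 - 1) = σ*ε/β * Real.log ((ε + 2*(1-ε)/(N:ℝ))/ε) ∧
    (β = 1 →
      (1/2) * σ * ε ≤ x (N/2) - x (N/2 - 1) ∧
      x (N/2) - x (N/2 - 1) ≤ 2 * σ / (N:ℝ)) :=
  stmt4_general N hN hNe ε σ β hε0 hε hσ x hx
end

section
/- For the Bakhvalov-type mesh, x_{N/2-1} ≥ c·σε·ln N and x_{N/2} = (σε/β)·ln(1/ε) ≥ c·σε·|ln ε| for some constant c > 0 independent of ε and N. -/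
/-!
At the transition point `i = N/2` the argument of the logarithm collapses to `ε`, so
`x_{N/2} = (σε/β) ln(1/ε)` exactly. One step earlier it equals `(εN + 2(1 - ε))/N ≤ 3/N`,
because `εN ≤ 1`; hence `x_{N/2-1} ≥ (σε/β)(ln N - ln 3)`, and for `N ≥ 4` the loss `ln 3` is
absorbed into a fixed fraction `κ = 1 - ln 3 / ln 4` of `ln N`. The constant is `c = κ / β`.
-/

open Real

noncomputable def bakhvalovMesh (σ β ε : ℝ) (N i : ℕ) : ℝ :=
  σ * ε / β * -log (1 - 2 * (1 - ε) * ((i : ℝ) / N))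

section BakhvalovMesh

variable {σ β ε : ℝ} {N : ℕ}

lemma bakhvalovMesh_half (hN : N ≠ 0) (hNe : Even N) :
    bakhvalovMesh σ β ε N (N / 2) = σ * ε / β * log (1 / ε) := by
  have hN' : (N : ℝ) ≠ 0 := Nat.cast_ne_zero.mpr hN
  have harg : 1 - 2 * (1 - ε) * (((N / 2 : ℕ) : ℝ) / N) = ε := by
    rw [Nat.cast_div_charZero (even_iff_two_dvd.mp hNe)]
    field_simp
    ring
  rw [bakhvalovMesh, harg, one_div, log_inv]

lemma bakhvalovMesh_half_sub_one (hN : 2 ≤ N) (hNe : Even N) :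
    bakhvalovMesh σ β ε N (N / 2 - 1) = σ * ε / β * log (N / (ε * N + 2 * (1 - ε))) := by
  have hN' : (N : ℝ) ≠ 0 := by positivity
  have harg : 1 - 2 * (1 - ε) * (((N / 2 - 1 : ℕ) : ℝ) / N) = (ε * N + 2 * (1 - ε)) / N := by
    rw [Nat.cast_sub (by omega), Nat.cast_div_charZero (even_iff_two_dvd.mp hNe)]
    field_simp
    ring
  rw [bakhvalovMesh, harg, ← log_inv, inv_div]

lemma log_sub_log_three_le_log_div (hN : 4 ≤ (N : ℝ)) (hε : 0 < ε) (hεN : ε * N ≤ 1) :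
    log N - log 3 ≤ log (N / (ε * N + 2 * (1 - ε))) := by
  have hε1 : ε ≤ 1 / 4 := by nlinarith
  rw [← log_div (by positivity) (by norm_num)]
  gcongr
  · nlinarith
  · linarith

end BakhvalovMesh

lemma one_sub_log_div_log_mul_log_le {a b t : ℝ} (ha : 1 ≤ a) (hb : 1 < b) (hbt : b ≤ t) :
    (1 - log a / log b) * log t ≤ log t - log a := by
  have hlogb : 0 < log b := log_pos hb
  have : log a ≤ log a / log b * log t := by
    calc log a = log a / log b * log b := (div_mul_cancel₀ _ hlogb.ne').symm
      _ ≤ log a / log b * log t := by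
        gcongr
        exact div_nonneg (log_nonneg ha) hlogb.le
  linarith

/-- For the Bakhvalov-type mesh, `x_{N/2-1} ≥ c·σε·ln N` and
`x_{N/2} = (σε/β)·ln(1/ε) ≥ c·σε·|ln ε|` for a constant `c > 0`
independent of `ε` and `N`. -/
theorem stmt5 (σ β : ℝ) (hσ : 0 < σ) (hβ : 0 < β) :
    ∃ c : ℝ, 0 < c ∧
      ∀ (N : ℕ) (ε : ℝ) (x : ℕ → ℝ), 4 ≤ N → Even N → 0 < ε → ε ≤ 1/(N:ℝ) →
        (∀ i ≤ N/2, x i = σ*ε/β * (-Real.log (1 - 2*(1-ε)*((i:ℝ)/(N:ℝ))))) →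
        c * σ * ε * Real.log N ≤ x (N/2 - 1) ∧
        x (N/2) = σ*ε/β * Real.log (1/ε) ∧
        c * σ * ε * |Real.log ε| ≤ x (N/2) := by
  set κ := 1 - log 3 / log 4
  have hκ_le : κ ≤ 1 :=
    sub_le_self _ (div_nonneg (log_nonneg (by norm_num)) (log_nonneg (by norm_num)))
  have hκ_pos : 0 < κ := by
    rw [sub_pos, div_lt_one (log_pos (by norm_num))]
    exact log_lt_log (by norm_num) (by norm_num)
  refine ⟨κ / β, div_pos hκ_pos hβ, fun N ε x hN hNe hε hεN hx => ?_⟩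
  have hx : ∀ i ≤ N / 2, x i = bakhvalovMesh σ β ε N i := hx
  have hN4 : (4 : ℝ) ≤ N := by exact_mod_cast hN
  have hεN' : ε * N ≤ 1 := (le_div_iff₀ (by positivity)).mp hεN
  have hlog_inv : 0 ≤ log (1 / ε) := log_nonneg (one_le_one_div hε (by nlinarith))
  rw [hx _ (Nat.sub_le _ _), hx _ le_rfl, bakhvalovMesh_half_sub_one (by omega) hNe,
    bakhvalovMesh_half (by omega) hNe, ← abs_neg, ← log_inv, ← one_div, abs_of_nonneg hlog_inv]
  refine ⟨?_, rfl, ?_⟩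
  · calc κ / β * σ * ε * log N = σ * ε / β * (κ * log N) := by ring
      _ ≤ σ * ε / β * (log N - log 3) := by
        gcongr
        exact one_sub_log_div_log_mul_log_le (by norm_num) (by norm_num) hN4
      _ ≤ σ * ε / β * log (N / (ε * N + 2 * (1 - ε))) := by
        gcongr
        exact log_sub_log_three_le_log_div hN4 hε hεN'
  · calc κ / β * σ * ε * log (1 / ε) = κ * (σ * ε / β * log (1 / ε)) := by ring
      _ ≤ σ * ε / β * log (1 / ε) := mul_le_of_le_one_left (by positivity) hκ_le
end

section
/- On the Bakhvalov-type mesh, for every 0 ≤ i ≤ N/2 - 2 and every real μ with 0 ≤ μ ≤ σ, the quantity h_i^μ · e^{-β x_i/ε} is bounded by C·ε^μ·N^{-μ} with C independent of ε, N, and i. -/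
/-!
With `t_i = 1 - 2(1-ε) i/N` we have `e^{-β x_i/ε} = t_i^σ` and `h_i = (σε/β) log (t_i/t_{i+1})`,
with the constant gap `t_i - t_{i+1} = 2(1-ε)/N`. Away from the transition point the gap is at most
`t_{i+1}`, so `t_i ≤ 2 t_{i+1}`. Then `log (t_i/t_{i+1}) ≤ (t_i - t_{i+1})/t_{i+1}` and
`t_i^σ ≤ t_i^μ ≤ (2 t_{i+1})^μ`, and the factors `t_{i+1}` cancel inside the `μ`-th power.
-/

open Real

lemma mul_log_div_rpow_mul_rpow_le {c t t' μ σ : ℝ} (hc : 0 ≤ c) (ht' : 0 < t') (htt' : t' ≤ t)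
    (ht1 : t ≤ 1) (ht2 : t ≤ 2 * t') (hμ : 0 ≤ μ) (hμσ : μ ≤ σ) :
    (c * log (t / t')) ^ μ * t ^ σ ≤ (2 * c * (t - t')) ^ μ := by
  have ht : 0 < t := ht'.trans_le htt'
  have hlog_nonneg : 0 ≤ c * log (t / t') :=
    mul_nonneg hc (log_nonneg ((one_le_div ht').2 htt'))
  have hlog_le : c * log (t / t') ≤ c * ((t - t') / t') := by
    gcongr
    calc log (t / t') ≤ t / t' - 1 := log_le_sub_one_of_pos (div_pos ht ht')
      _ = (t - t') / t' := by field_simp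
  calc (c * log (t / t')) ^ μ * t ^ σ ≤ (c * ((t - t') / t')) ^ μ * (2 * t') ^ μ := by
        gcongr
        exact (rpow_le_rpow_of_exponent_ge ht ht1 hμσ).trans (rpow_le_rpow ht.le ht2 hμ)
    _ = (2 * c * (t - t')) ^ μ := by
        rw [← mul_rpow (by have := sub_nonneg.2 htt'; positivity) (by positivity)]
        congr 1
        field_simp

lemma rpow_le_max_one_rpow {a μ σ : ℝ} (ha : 0 ≤ a) (hμ : 0 ≤ μ) (hμσ : μ ≤ σ) :
    a ^ μ ≤ max a 1 ^ σ :=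
  (rpow_le_rpow ha (le_max_left a 1) hμ).trans
    (rpow_le_rpow_of_exponent_le (le_max_right a 1) hμσ)

namespace Bakhvalov

/-- `t_i = e^{-φ(i/N)}`, so that `x_i = (σε/β)·(-log t_i)` and `e^{-β x_i/ε} = t_i^σ`. -/
noncomputable def layer (ε : ℝ) (N i : ℕ) : ℝ := 1 - 2 * (1 - ε) * ((i : ℝ) / (N : ℝ))

variable {ε : ℝ} {N : ℕ}

lemma layer_sub_layer_succ (hN : (N : ℝ) ≠ 0) (i : ℕ) :
    layer ε N i - layer ε N (i + 1) = 2 * (1 - ε) / N := by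
  unfold layer; push_cast; field_simp; ring

lemma layer_le_one (hε1 : ε ≤ 1) (i : ℕ) : layer ε N i ≤ 1 := by
  unfold layer
  have : 0 ≤ 2 * (1 - ε) * ((i : ℝ) / N) := by positivity
  linarith

lemma gap_le_layer_succ (hε0 : 0 ≤ ε) {i : ℕ} (hi : 2 * i + 4 ≤ N) :
    2 * (1 - ε) / N ≤ layer ε N (i + 1) := by
  have hi' : 2 * (i : ℝ) + 4 ≤ N := by exact_mod_cast hi
  have hN : (0 : ℝ) < N := by linarith [(i.cast_nonneg : (0 : ℝ) ≤ i)]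
  unfold layer
  rw [div_le_iff₀ hN, sub_mul, mul_assoc _ _ (N : ℝ), div_mul_cancel₀ _ hN.ne']
  push_cast
  nlinarith

lemma layer_succ_pos (hε0 : 0 ≤ ε) (hε1 : ε < 1) {i : ℕ} (hi : 2 * i + 4 ≤ N) :
    0 < layer ε N (i + 1) := by
  have hN : (0 : ℝ) < N := by exact_mod_cast (show 0 < N by omega)
  have := sub_pos.2 hε1
  exact lt_of_lt_of_le (by positivity) (gap_le_layer_succ hε0 hi)

lemma layer_pos (hε0 : 0 ≤ ε) (hε1 : ε < 1) {i : ℕ} (hi : 2 * i + 4 ≤ N) : 0 < layer ε N i := by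
  have hgap := layer_sub_layer_succ (ε := ε) (N := N) (by norm_cast; omega) i
  have : 0 ≤ 2 * (1 - ε) / N := by have := sub_pos.2 hε1; positivity
  linarith [layer_succ_pos hε0 hε1 hi]

lemma exp_neg_mul_div_eq_rpow {β σ t : ℝ} (hβ : β ≠ 0) (hε : ε ≠ 0) (ht : 0 < t) :
    exp (-β * (σ * ε / β * -log t) / ε) = t ^ σ := by
  rw [rpow_def_of_pos ht]
  congr 1
  field_simp

lemma log_layer_div_rpow_mul_rpow_le {β σ μ : ℝ} (hβ : 0 < β) (hε0 : 0 < ε) (hε1 : ε < 1)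
    {i : ℕ} (hi : 2 * i + 4 ≤ N) (hμ : 0 ≤ μ) (hμσ : μ ≤ σ) :
    (σ * ε / β * log (layer ε N i / layer ε N (i + 1))) ^ μ * layer ε N i ^ σ ≤
      (4 * σ / β * ε * (N : ℝ)⁻¹) ^ μ := by
  have hσ : 0 ≤ σ := hμ.trans hμσ
  have hN : (0 : ℝ) < N := by exact_mod_cast (show 0 < N by omega)
  have hgap := layer_sub_layer_succ (ε := ε) hN.ne' i
  have hgap_le := gap_le_layer_succ hε0.le hi
  have hgap_pos : 0 < 2 * (1 - ε) / N := by have := sub_pos.2 hε1; positivity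
  calc (σ * ε / β * log (layer ε N i / layer ε N (i + 1))) ^ μ * layer ε N i ^ σ
      ≤ (2 * (σ * ε / β) * (layer ε N i - layer ε N (i + 1))) ^ μ :=
        mul_log_div_rpow_mul_rpow_le (by positivity) (by linarith) (by linarith)
          (layer_le_one hε1.le i) (by linarith) hμ hμσ
    _ = (4 * σ / β * ε * (N : ℝ)⁻¹ * (1 - ε)) ^ μ := by rw [hgap]; ring_nf
    _ ≤ (4 * σ / β * ε * (N : ℝ)⁻¹) ^ μ :=
        rpow_le_rpow (mul_nonneg (by positivity) (by linarith))
          (mul_le_of_le_one_right (by positivity) (by linarith)) hμ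

end Bakhvalov

open Bakhvalov in
theorem stmt6_general (σ β : ℝ) (hβ : 0 < β) :
    ∃ C : ℝ, 0 < C ∧
      ∀ (N : ℕ) (ε : ℝ) (x h : ℕ → ℝ), 4 ≤ N → Even N → 0 < ε → ε ≤ 1/(N:ℝ) →
        (∀ i ≤ N/2, x i = σ*ε/β * (-Real.log (1 - 2*(1-ε)*((i:ℝ)/(N:ℝ))))) →
        (∀ i, h i = x (i+1) - x i) →
        ∀ (i : ℕ) (μ : ℝ), i ≤ N/2 - 2 → 0 ≤ μ → μ ≤ σ →
          (h i) ^ μ * Real.exp (-β * x i / ε) ≤ C * ε ^ μ * (N:ℝ) ^ (-μ) := by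
  refine ⟨max (4 * σ / β) 1 ^ σ, by positivity, ?_⟩
  intro N ε x h hN4 _ hε hεN hx hh i μ hi hμ hμσ
  have hN : (4 : ℝ) ≤ N := by exact_mod_cast hN4
  have hε1 : ε < 1 := hεN.trans_lt (by rw [div_lt_one₀ (by linarith)]; linarith)
  have hi4 : 2 * i + 4 ≤ N := by omega
  have hsucc_pos := layer_succ_pos hε.le hε1 hi4
  have hi_pos := layer_pos hε.le hε1 hi4
  have hxi : x i = σ * ε / β * -log (layer ε N i) := hx i (by omega)
  have hxi' : x (i + 1) = σ * ε / β * -log (layer ε N (i + 1)) := hx (i + 1) (by omega)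
  have hhi : h i = σ * ε / β * log (layer ε N i / layer ε N (i + 1)) := by
    rw [hh, hxi, hxi', log_div hi_pos.ne' hsucc_pos.ne']
    ring
  have hσ : 0 ≤ σ := hμ.trans hμσ
  calc h i ^ μ * exp (-β * x i / ε)
      = (σ * ε / β * log (layer ε N i / layer ε N (i + 1))) ^ μ * layer ε N i ^ σ := by
        rw [hhi, hxi, exp_neg_mul_div_eq_rpow hβ.ne' hε.ne' hi_pos]
    _ ≤ (4 * σ / β * ε * (N : ℝ)⁻¹) ^ μ := log_layer_div_rpow_mul_rpow_le hβ hε hε1 hi4 hμ hμσ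
    _ = (4 * σ / β) ^ μ * ε ^ μ * (N : ℝ) ^ (-μ) := by
        rw [mul_rpow (by positivity) (by positivity), mul_rpow (by positivity) hε.le,
          inv_rpow (by positivity), rpow_neg (by positivity)]
    _ ≤ max (4 * σ / β) 1 ^ σ * ε ^ μ * (N : ℝ) ^ (-μ) := by
        gcongr
        exact rpow_le_max_one_rpow (by positivity) hμ hμσ

/-- On the Bakhvalov-type mesh, for every `0 ≤ i ≤ N/2 - 2` and real `0 ≤ μ ≤ σ`,
`h_i^μ · e^{-β x_i/ε} ≤ C·ε^μ·N^{-μ}` with `C` independent of `ε`, `N` and `i`. -/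
theorem stmt6 (σ β : ℝ) (hσ : 0 < σ) (hβ : 0 < β) :
    ∃ C : ℝ, 0 < C ∧
      ∀ (N : ℕ) (ε : ℝ) (x h : ℕ → ℝ), 4 ≤ N → Even N → 0 < ε → ε ≤ 1/(N:ℝ) →
        (∀ i ≤ N/2, x i = σ*ε/β * (-Real.log (1 - 2*(1-ε)*((i:ℝ)/(N:ℝ))))) →
        (∀ i, h i = x (i+1) - x i) →
        ∀ (i : ℕ) (μ : ℝ), i ≤ N/2 - 2 → 0 ≤ μ → μ ≤ σ →
          (h i) ^ μ * Real.exp (-β * x i / ε) ≤ C * ε ^ μ * (N:ℝ) ^ (-μ) :=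
  stmt6_general σ β hβ
end

section
/- For ε ≤ N^{-1}, the Bakhvalov transition step satisfies h_{N/2-1,x} = (σε/β)·ln((εN + 2(1-ε))/(εN)) ≤ (σ/β)·N^{-1}·sup_{0<s≤1}[s·ln((s+2)/s)]-type bound, and in particular h_{N/2-1,x} ≤ C·N^{-1} with C = 2σ/β, using the inequality t·ln(1 + a/t) ≤ a for all t, a > 0. -/
open Real

/-! `ln (1 + u) ≤ u` gives `t ln (1 + a/t) ≤ a`. With `t = εN` and `a = 2(1 - ε)` this bounds
`εN · ln ((εN + 2(1 - ε))/(εN))` by `2`, so the transition step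
`(σε/β) ln ((εN + 2(1 - ε))/(εN))` is at most `2σ/(βN)`. -/

theorem Real.mul_log_one_add_div_le {t a : ℝ} (ht : 0 < t) (ha : 0 ≤ a) :
    t * log (1 + a / t) ≤ a := by
  have hlog : log (1 + a / t) ≤ a / t := by
    linarith [log_le_sub_one_of_pos (x := 1 + a / t) (by positivity)]
  calc t * log (1 + a / t) ≤ t * (a / t) := mul_le_mul_of_nonneg_left hlog ht.le
    _ = a := by field_simp

theorem Real.mul_log_add_div_mul_le {ε n a : ℝ} (hε : 0 < ε) (hn : 0 < n) (ha : 0 ≤ a) :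
    ε * log ((ε * n + a) / (ε * n)) ≤ a / n := by
  have hεn : 0 < ε * n := mul_pos hε hn
  have key : ε * n * log (1 + a / (ε * n)) ≤ a := mul_log_one_add_div_le hεn ha
  rw [le_div_iff₀ hn]
  calc ε * log ((ε * n + a) / (ε * n)) * n = ε * n * log (1 + a / (ε * n)) := by
        rw [add_div, div_self hεn.ne']; ring
    _ ≤ a := key

theorem Real.log_one_div_sub_log_div {ε n d : ℝ} (hε : ε ≠ 0) (hn : n ≠ 0) (hd : d ≠ 0) :
    log (1 / ε) - log (n / d) = log (d / (ε * n)) := by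
  rw [← log_div (by simpa using hε) (div_ne_zero hn hd)]
  congr 1
  field_simp

theorem stmt17_general (N : ℕ) (ε σ β : ℝ)
    (hε0 : 0 < ε) (hε : ε ≤ 1/(N:ℝ)) (hσ : 0 < σ) (hβ : 0 < β)
    (xh xhm : ℝ)
    (hxh : xh = σ*ε/β * Real.log (1/ε))
    (hxhm : xhm = σ*ε/β * Real.log ((N:ℝ)/(ε*(N:ℝ) + 2*(1-ε)))) :
    xh - xhm = σ*ε/β * Real.log ((ε*(N:ℝ) + 2*(1-ε))/(ε*(N:ℝ))) ∧
    xh - xhm ≤ (2*σ/β) * (1/(N:ℝ)) ∧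
    (∀ t a : ℝ, 0 < t → 0 < a → t * Real.log (1 + a/t) ≤ a) := by
  -- `N = 0` would force `ε ≤ 1/0 = 0`.
  have hN : (1 : ℝ) ≤ N := by
    rcases Nat.eq_zero_or_pos N with rfl | hpos
    · simp at hε; linarith
    · exact_mod_cast hpos
  have hε1 : ε ≤ 1 := hε.trans (div_le_one_of_le₀ hN (by positivity))
  have hstep : xh - xhm = σ*ε/β * log ((ε*N + 2*(1-ε))/(ε*N)) := by
    rw [hxh, hxhm, ← mul_sub, log_one_div_sub_log_div hε0.ne' (by positivity) (by nlinarith)]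
  refine ⟨hstep, ?_, fun t a ht ha => mul_log_one_add_div_le ht ha.le⟩
  have hlog := mul_log_add_div_mul_le hε0 (by positivity : (0:ℝ) < N) (by linarith : 0 ≤ 2*(1-ε))
  calc xh - xhm = σ/β * (ε * log ((ε*N + 2*(1-ε))/(ε*N))) := by rw [hstep]; ring
    _ ≤ σ/β * (2*(1-ε) / N) := by gcongr
    _ ≤ σ/β * (2 / N) := by gcongr; linarith
    _ = 2*σ/β * (1/N) := by ring

/-- The Bakhvalov transition step
`h_{N/2-1,x} = x_{N/2} - x_{N/2-1}` equals `(σε/β)·ln((εN + 2(1-ε))/(εN))` and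
is at most `(2σ/β)·N^{-1}`, using the elementary inequality
`t·ln(1 + a/t) ≤ a` for all `t, a > 0`. -/
theorem stmt17 (N : ℕ) (hN : 4 ≤ N) (hNe : Even N) (ε σ β : ℝ)
    (hε0 : 0 < ε) (hε : ε ≤ 1/(N:ℝ)) (hσ : 0 < σ) (hβ : 0 < β)
    (xh xhm : ℝ)
    (hxh : xh = σ*ε/β * Real.log (1/ε))
    (hxhm : xhm = σ*ε/β * Real.log ((N:ℝ)/(ε*(N:ℝ) + 2*(1-ε)))) :
    xh - xhm = σ*ε/β * Real.log ((ε*(N:ℝ) + 2*(1-ε))/(ε*(N:ℝ))) ∧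
    xh - xhm ≤ (2*σ/β) * (1/(N:ℝ)) ∧
    (∀ t a : ℝ, 0 < t → 0 < a → t * Real.log (1 + a/t) ≤ a) :=
  stmt17_general N ε σ β hε0 hε hσ hβ xh xhm hxh hxhm
end
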